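/- arXiv:1912.12579 — 2 statements merged into one kernel-verified Lean document; each statement's English description precedes it below -/
import Mathlib

section
/- For α ≠ 0 and a, b ∈ ℝ, the function ψ(r,z) = (a + bz)·r·J₁(|α|r) satisfies D²ψ = -α²ψ on {(r,z) : r > 0} and ψ(r,z) → 0 as r → 0⁺ for each fixed z. -/
/-!
Write `ψ r z = (a + b z) g r` with `g r = r J₁(c r)`, `c = |α|`. The operator `D²` acts on the affine factor
in `z` by `∂²/∂z² = 0`, so `D²ψ = (a + b z) (g'' - g'/r)`. Computing `g' = J₁(cr) + c r J₁'(cr)` and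
`g'' = 2c J₁'(cr) + c² r J₁''(cr)` gives `r (g'' - g'/r + c² g) = x² J₁''(x) + x J₁'(x) + (x² - 1) J₁(x)`
at `x = c r`, which vanishes by Bessel's equation; the boundary limit is just continuity of `r J₁(c r)`.
-/

noncomputable def D2 (ψ : ℝ → ℝ → ℝ) (r z : ℝ) : ℝ :=
  deriv (fun s => deriv (fun t => ψ t z) s) r
    - (1 / r) * deriv (fun t => ψ t z) r
    + deriv (fun s => deriv (fun t => ψ r t) s) z

theorem D2_affine_mul (a b : ℝ) (g : ℝ → ℝ) (r z : ℝ) :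
    D2 (fun r z => (a + b * z) * g r) r z
      = (a + b * z) * (deriv (deriv g) r - (1 / r) * deriv g r) := by
  have hz : deriv (fun t => (a + b * t) * g r) = fun _ => b * g r := by
    funext t
    simp
  simp only [D2, deriv_const_mul_field', hz, deriv_const]
  ring

section RadialBessel

variable {f : ℝ → ℝ} (c : ℝ)

theorem hasDerivAt_comp_mul_left {t : ℝ} (hf : DifferentiableAt ℝ f (c * t)) :
    HasDerivAt (fun t => f (c * t)) (c * deriv f (c * t)) t := by
  simpa [Function.comp_def, mul_comm] using hf.hasDerivAt.comp t ((hasDerivAt_id t).const_mul c)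

theorem hasDerivAt_mul_comp_mul_left {t : ℝ} (hf : DifferentiableAt ℝ f (c * t)) :
    HasDerivAt (fun t => t * f (c * t)) (f (c * t) + t * (c * deriv f (c * t))) t := by
  simpa using (hasDerivAt_id' t).fun_mul (hasDerivAt_comp_mul_left c hf)

theorem deriv_deriv_mul_comp_mul_left (hf : ContDiff ℝ 2 f) (r : ℝ) :
    deriv (deriv fun t => t * f (c * t)) r
      = 2 * c * deriv f (c * r) + c ^ 2 * r * deriv (deriv f) (c * r) := by
  have hf' : ContDiff ℝ 1 (deriv f) := hf.iterate_deriv' 1 1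
  have hderiv : deriv (fun t => t * f (c * t)) = fun t => f (c * t) + t * (c * deriv f (c * t)) :=
    funext fun t => (hasDerivAt_mul_comp_mul_left c (hf.differentiable two_ne_zero _)).deriv
  rw [hderiv]
  have hsecond := (hasDerivAt_comp_mul_left c (hf.differentiable two_ne_zero (c * r))).fun_add
    ((hasDerivAt_id' r).fun_mul
      ((hasDerivAt_comp_mul_left c (hf'.differentiable one_ne_zero (c * r))).const_mul c))
  rw [hsecond.deriv]
  ring

theorem deriv_deriv_sub_div_deriv_mul_comp_mul_left (hf : ContDiff ℝ 2 f) {r : ℝ} (hr : r ≠ 0)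
    (hode : (c * r) ^ 2 * deriv (deriv f) (c * r) + c * r * deriv f (c * r)
      + ((c * r) ^ 2 - 1) * f (c * r) = 0) :
    deriv (deriv fun t => t * f (c * t)) r - (1 / r) * deriv (fun t => t * f (c * t)) r
      = -c ^ 2 * (r * f (c * r)) := by
  rw [deriv_deriv_mul_comp_mul_left c hf,
    (hasDerivAt_mul_comp_mul_left c (hf.differentiable two_ne_zero _)).deriv]
  field_simp
  linear_combination hode

end RadialBessel

theorem stmt8_general (α a b : ℝ) (J1 : ℝ → ℝ)
    (hJ : ContDiff ℝ 2 J1)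
    (hJode : ∀ x : ℝ,
      x ^ 2 * deriv (deriv J1) x + x * deriv J1 x + (x ^ 2 - 1) * J1 x = 0) :
    (∀ r z : ℝ, 0 < r →
      D2 (fun r z => (a + b * z) * (r * J1 (|α| * r))) r z
        = -α ^ 2 * ((a + b * z) * (r * J1 (|α| * r)))) ∧
    (∀ z : ℝ, Filter.Tendsto (fun r => (a + b * z) * (r * J1 (|α| * r)))
      (nhdsWithin 0 (Set.Ioi 0)) (nhds 0)) := by
  constructor
  · intro r z hr
    rw [D2_affine_mul a b (fun r => r * J1 (|α| * r)),
      deriv_deriv_sub_div_deriv_mul_comp_mul_left |α| hJ hr.ne' (hJode _), sq_abs]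
    ring
  · intro z
    have hcont : Continuous fun r => (a + b * z) * (r * J1 (|α| * r)) := by
      have := hJ.continuous
      fun_prop
    simpa using (hcont.tendsto 0).mono_left nhdsWithin_le_nhds

theorem stmt8 (α a b : ℝ) (hα : α ≠ 0) (J1 : ℝ → ℝ)
    (hJ : ContDiff ℝ 2 J1)
    (hJode : ∀ x : ℝ,
      x ^ 2 * deriv (deriv J1) x + x * deriv J1 x + (x ^ 2 - 1) * J1 x = 0)
    (hJlim : Filter.Tendsto J1 (nhdsWithin 0 (Set.Ioi 0)) (nhds 0)) :
    (∀ r z : ℝ, 0 < r →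
      D2 (fun r z => (a + b * z) * (r * J1 (|α| * r))) r z
        = -α ^ 2 * ((a + b * z) * (r * J1 (|α| * r)))) ∧
    (∀ z : ℝ, Filter.Tendsto (fun r => (a + b * z) * (r * J1 (|α| * r)))
      (nhdsWithin 0 (Set.Ioi 0)) (nhds 0)) :=
  stmt8_general α a b J1 hJ hJode
end

section
/- For constants c > α² ≥ 0 and a, b ∈ ℝ, the function ψ(r,z) = r·J₁(r√c)·(a·exp(z√(c-α²)) + b·exp(-z√(c-α²))) satisfies D²ψ = -α²ψ on {(r,z) : r > 0}. -/
open Real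

theorem D2_mul (f g : ℝ → ℝ) (r z : ℝ) :
    D2 (fun r z => f r * g z) r z
      = (deriv (deriv f) r - 1 / r * deriv f r) * g z + f r * deriv (deriv g) z := by
  simp only [D2, deriv_mul_const_field', deriv_const_mul_field']
  ring

theorem HasDerivAt.comp_mul_const {f : ℝ → ℝ} {f' x : ℝ} (s : ℝ) (hf : HasDerivAt f f' (x * s)) :
    HasDerivAt (fun t => f (t * s)) (f' * s) x := by
  simpa [Function.comp_def] using hf.comp x ((hasDerivAt_id x).mul_const s)

section Radial

variable {J : ℝ → ℝ} (s : ℝ)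

theorem hasDerivAt_mul_comp_mul_const (hJ : Differentiable ℝ J) (r : ℝ) :
    HasDerivAt (fun t => t * J (t * s)) (J (r * s) + r * s * deriv J (r * s)) r := by
  refine ((hasDerivAt_id r).mul ((hJ (r * s)).hasDerivAt.comp_mul_const s)).congr_deriv ?_
  simp only [id_eq]
  ring

theorem deriv_deriv_mul_comp_mul_const (hJ : Differentiable ℝ J)
    (hJ' : Differentiable ℝ (deriv J)) (r : ℝ) :
    deriv (deriv fun t => t * J (t * s)) r
      = 2 * s * deriv J (r * s) + r * s ^ 2 * deriv (deriv J) (r * s) := by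
  have hderiv : (deriv fun t => t * J (t * s)) = fun t => J (t * s) + t * s * deriv J (t * s) :=
    funext fun t => (hasDerivAt_mul_comp_mul_const s hJ t).deriv
  rw [hderiv]
  refine HasDerivAt.deriv <| (((hJ (r * s)).hasDerivAt.comp_mul_const s).add
    (((hasDerivAt_id r).mul_const s).mul ((hJ' (r * s)).hasDerivAt.comp_mul_const s))).congr_deriv ?_
  simp only [id_eq]
  ring

/-- Multiplying by `r`, the claim becomes Bessel's equation of order one at `x = r s`. -/
theorem radial_eigen_of_bessel_one (hJ : Differentiable ℝ J) (hJ' : Differentiable ℝ (deriv J))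
    (hode : ∀ x : ℝ, x ^ 2 * deriv (deriv J) x + x * deriv J x + (x ^ 2 - 1) * J x = 0)
    {r : ℝ} (hr : r ≠ 0) :
    deriv (deriv fun t => t * J (t * s)) r - 1 / r * deriv (fun t => t * J (t * s)) r
      = -s ^ 2 * (r * J (r * s)) := by
  rw [deriv_deriv_mul_comp_mul_const s hJ hJ', (hasDerivAt_mul_comp_mul_const s hJ r).deriv]
  field_simp
  rw [mul_comm s r]
  linear_combination hode (r * s)

end Radial

theorem hasDerivAt_exp_mul_add_exp_neg_mul (a b k z : ℝ) :
    HasDerivAt (fun z => a * exp (z * k) + b * exp (-z * k))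
      (k * (a * exp (z * k) + -b * exp (-z * k))) z := by
  refine (((hasDerivAt_exp (z * k)).comp_mul_const k |>.const_mul a).add
    ((hasDerivAt_exp (-z * k)).comp_mul_const k |>.comp z (hasDerivAt_neg z) |>.const_mul b)
    ).congr_deriv ?_
  ring

theorem deriv_deriv_exp_mul_add_exp_neg_mul (a b k z : ℝ) :
    deriv (deriv fun z => a * exp (z * k) + b * exp (-z * k)) z
      = k ^ 2 * (a * exp (z * k) + b * exp (-z * k)) := by
  have hderiv : (deriv fun z => a * exp (z * k) + b * exp (-z * k))
      = fun z => k * (a * exp (z * k) + -b * exp (-z * k)) :=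
    funext fun z => (hasDerivAt_exp_mul_add_exp_neg_mul a b k z).deriv
  rw [hderiv, ((hasDerivAt_exp_mul_add_exp_neg_mul a (-b) k z).const_mul k).deriv]
  ring

theorem stmt9 (α c a b : ℝ) (hc : α ^ 2 < c) (J1 : ℝ → ℝ)
    (hJ : ContDiff ℝ 2 J1)
    (hJode : ∀ x : ℝ,
      x ^ 2 * deriv (deriv J1) x + x * deriv J1 x + (x ^ 2 - 1) * J1 x = 0) :
    ∀ r z : ℝ, 0 < r →
      D2 (fun r z => r * J1 (r * Real.sqrt c) *
          (a * Real.exp (z * Real.sqrt (c - α ^ 2))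
            + b * Real.exp (-z * Real.sqrt (c - α ^ 2)))) r z
        = -α ^ 2 * (r * J1 (r * Real.sqrt c) *
            (a * Real.exp (z * Real.sqrt (c - α ^ 2))
              + b * Real.exp (-z * Real.sqrt (c - α ^ 2)))) := by
  intro r z hr
  obtain ⟨hJd, -, hJ'⟩ := contDiff_succ_iff_deriv.mp (by exact_mod_cast hJ : ContDiff ℝ (1 + 1) J1)
  have hs : sqrt c ^ 2 = c := sq_sqrt ((sq_nonneg α).trans hc.le)
  have hk : sqrt (c - α ^ 2) ^ 2 = c - α ^ 2 := sq_sqrt (sub_nonneg.mpr hc.le)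
  rw [D2_mul (fun r => r * J1 (r * sqrt c)),
    radial_eigen_of_bessel_one _ hJd (hJ'.differentiable one_ne_zero) hJode hr.ne',
    deriv_deriv_exp_mul_add_exp_neg_mul, hs, hk]
  ring
end
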